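/- arXiv:1409.4455 — 2 statements merged into one kernel-verified Lean document; each statement's English description precedes it below -/
import Mathlib

section
/- Let k ≥ 1 be an integer, let Y : ℝ → ℝ be differentiable, and let P : ℝ → (real symmetric n×n matrices) be differentiable (entrywise). Then the function t ↦ σ_k^∞(Y(t);P(t)) is differentiable, and its derivative equals σ_{k−1}^∞(Y(t);P(t))·Y′(t) + Σ_{j=0}^{k−1} ((−1)^j/(j+1))·σ_{k−1−j}^∞(Y(t);P(t))·(d/dt) trace(P(t)^{j+1}). -/
/-!
`σ_k^∞(μ; P)` is the `X^k`-coefficient of the generating function `S = exp(μX) · det(1 + XP)`.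
Newton's identities, read through the eigenvalues of the symmetric matrix `P`, say that
`∂_X S = H · S` with `H = μ + ∑_j (-1)^j tr(P^{j+1}) X^j`, i.e. `log S` is an `X`-antiderivative
of `H`. Differentiating in `t` then gives `∂_t S = K · S` for the `X`-antiderivative `K` of
`∂_t H` with `K(0) = 0`, and the claimed formula is the `X^k`-coefficient of `K · S`. Since eigenvalues need not depend
differentiably on `t`, the `t`-derivative is computed coefficientwise, by strong induction on the
degree, from the recursion `(m + 1) S_{m+1} = (H · S)_m`.
-/

/-- The `m`-th elementary symmetric polynomial of the eigenvalues of an `n × n` matrix `A`,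
expressed via the appropriately signed coefficient of the characteristic polynomial of `A`
(so it is a polynomial function of the entries of `A`); `σ₀ = 1` and `σ_m = 0` for `m > n`. -/
noncomputable def esymmMat {n : ℕ} (A : Matrix (Fin n) (Fin n) ℝ) (m : ℕ) : ℝ :=
  if m ≤ n then (-1 : ℝ) ^ m * (Matrix.charpoly A).coeff (n - m) else 0

/-- `σ_k^∞(μ₀;A) = ∑_{j=0}^k (μ₀^j/j!) σ_{k-j}(A)` for an `n × n` matrix `A`. -/
noncomputable def sigmaInfMat {n : ℕ} (μ₀ : ℝ) (A : Matrix (Fin n) (Fin n) ℝ) (k : ℕ) : ℝ :=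
  ∑ j ∈ Finset.range (k + 1), μ₀ ^ j / (Nat.factorial j : ℝ) * esymmMat A (k - j)

open Finset PowerSeries

namespace MvPolynomial

theorem succ_mul_esymm_eq_sum (σ R : Type*) [Fintype σ] [CommRing R] (m : ℕ) :
    ((m + 1 : ℕ) : MvPolynomial σ R) * esymm σ R (m + 1) =
      ∑ p ∈ antidiagonal m, (-1) ^ p.1 * psum σ R (p.1 + 1) * esymm σ R p.2 := by
  rw [mul_esymm_eq_sum, sum_filter, Nat.sum_antidiagonal_succ', if_neg (lt_irrefl _), zero_add,
    ← Nat.sum_antidiagonal_swap, mul_sum]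
  refine sum_congr rfl fun p hp => ?_
  obtain ⟨a, b⟩ := p
  obtain rfl : m = a + b := (mem_antidiagonal.mp hp).symm
  rw [Prod.swap_prod_mk, if_pos (by simp), ← mul_assoc, ← mul_assoc, ← pow_add,
    show a + b + 1 + 1 + b = a + 2 * (b + 1) by ring, pow_add, pow_mul, neg_one_sq, one_pow,
    mul_one]
  ring

end MvPolynomial

namespace PowerSeries

theorem derivative_rescale {R : Type*} [CommRing R] (a : R) (f : R⟦X⟧) :
    d⁄dX R (rescale a f) = C a * rescale a (d⁄dX R f) := by
  ext n
  simp only [coeff_derivative, coeff_rescale, coeff_C_mul]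
  ring

theorem derivative_rescale_exp {A : Type*} [CommRing A] [Algebra ℚ A] (a : A) :
    d⁄dX A (rescale a (exp A)) = C a * rescale a (exp A) := by
  rw [derivative_rescale, derivative_exp]

theorem hasDerivAt_coeff_of_derivative_eq_mul {𝕜 : Type*} [NontriviallyNormedField 𝕜]
    [CharZero 𝕜] {S H : 𝕜 → 𝕜⟦X⟧} {K : 𝕜⟦X⟧} {t : 𝕜}
    (hS : ∀ s, d⁄dX 𝕜 (S s) = H s * S s)
    (hH : ∀ m, HasDerivAt (fun s => coeff m (H s)) (coeff m (d⁄dX 𝕜 K)) t)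
    (hS₀ : HasDerivAt (fun s => coeff 0 (S s)) (coeff 0 (K * S t)) t) (m : ℕ) :
    HasDerivAt (fun s => coeff m (S s)) (coeff m (K * S t)) t := by
  induction m using Nat.strong_induction_on with
  | _ m ih =>
  rcases m with _ | m
  · exact hS₀
  have hm : (m + 1 : 𝕜) ≠ 0 := Nat.cast_add_one_ne_zero m
  have hcoeff : ∀ s, coeff (m + 1) (S s) = (m + 1 : 𝕜)⁻¹ * coeff m (H s * S s) := fun s => by
    rw [← hS, coeff_derivative, mul_comm, mul_inv_cancel_right₀ hm]
  have hprod : HasDerivAt (fun s => coeff m (H s * S s))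
      (coeff m (d⁄dX 𝕜 K * S t + H t * (K * S t))) t := by
    simp only [map_add, coeff_mul m (d⁄dX 𝕜 K), coeff_mul m (H _), ← sum_add_distrib]
    exact HasDerivAt.fun_sum fun p hp => (hH p.1).mul (ih p.2 (Nat.antidiagonal.snd_lt hp))
  have hleibniz : d⁄dX 𝕜 K * S t + H t * (K * S t) = d⁄dX 𝕜 (K * S t) := by
    rw [Derivation.leibniz, hS, smul_eq_mul, smul_eq_mul]
    ring
  simp_rw [hcoeff]
  refine (hprod.const_mul (m + 1 : 𝕜)⁻¹).congr_deriv ?_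
  rw [hleibniz, coeff_derivative, mul_comm, mul_inv_cancel_right₀ hm]

theorem hasDerivAt_coeff_C_add_mk {𝕜 : Type*} [NontriviallyNormedField 𝕜] [CharZero 𝕜]
    {f : 𝕜 → 𝕜} {g : ℕ → 𝕜 → 𝕜} {t : 𝕜} (hf : DifferentiableAt 𝕜 f t)
    (hg : ∀ j, DifferentiableAt 𝕜 (g j) t) (m : ℕ) :
    HasDerivAt (fun s => coeff m (C (f s) + mk fun j => g j s))
      (coeff m (d⁄dX 𝕜 (X * (C (deriv f t) + mk fun j => deriv (g j) t / (j + 1))))) t := by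
  have hm : (m + 1 : 𝕜) ≠ 0 := Nat.cast_add_one_ne_zero m
  simp only [coeff_derivative, coeff_succ_X_mul, map_add, coeff_C, coeff_mk, add_mul,
    div_mul_cancel₀ _ hm]
  rcases m with _ | m
  · simpa using hf.hasDerivAt.fun_add (hg 0).hasDerivAt
  · simpa using (hg (m + 1)).hasDerivAt

end PowerSeries

section Differentiability

variable {𝕜 E ι : Type*} [NontriviallyNormedField 𝕜] [NormedAddCommGroup E] [NormedSpace 𝕜 E]
  [Fintype ι] [DecidableEq ι] {P : E → Matrix ι ι 𝕜}

theorem differentiable_matrix_pow_apply (hP : ∀ i j, Differentiable 𝕜 fun x => P x i j)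
    (k : ℕ) : ∀ i j, Differentiable 𝕜 fun x => (P x ^ k) i j := by
  induction k with
  | zero =>
    intro i j
    simp only [pow_zero]
    exact differentiable_const _
  | succ k ih =>
    intro i j
    simp only [pow_succ, Matrix.mul_apply]
    exact Differentiable.fun_sum fun l _ => (ih i l).mul (hP l j)

theorem differentiable_trace_matrix_pow (hP : ∀ i j, Differentiable 𝕜 fun x => P x i j)
    (k : ℕ) : Differentiable 𝕜 fun x => (P x ^ k).trace :=
  Differentiable.fun_sum fun i _ => differentiable_matrix_pow_apply hP k i i

end Differentiability

theorem Matrix.IsHermitian.trace_pow_eq_sum_eigenvalues_pow {𝕜 ι : Type*} [RCLike 𝕜]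
    [Fintype ι] [DecidableEq ι] {A : Matrix ι ι 𝕜} (hA : A.IsHermitian) (j : ℕ) :
    (A ^ j).trace = ∑ i, (hA.eigenvalues i : 𝕜) ^ j := by
  conv_lhs => rw [hA.spectral_theorem]
  rw [← map_pow, Unitary.conjStarAlgAut_apply, trace_mul_cycle, Unitary.coe_star_mul_self,
    one_mul, diagonal_pow, trace_diagonal]
  simp

section SymmetricFunctionsOfMatrices

variable {n : ℕ}

theorem esymmMat_eq_esymm_eigenvalues {A : Matrix (Fin n) (Fin n) ℝ} (hA : A.IsHermitian)
    (m : ℕ) : esymmMat A m = (univ.val.map hA.eigenvalues).esymm m := by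
  have hroots := hA.roots_charpoly_eq_eigenvalues
  simp only [RCLike.ofReal_real_eq_id, Function.id_comp] at hroots
  unfold esymmMat
  split_ifs with hm
  · rw [Polynomial.coeff_eq_esymm_roots_of_card (by simp [hroots]) (by simp)]
    simp [hroots, A.charpoly_monic.leadingCoeff, Nat.sub_sub_self hm, ← mul_assoc, ← pow_add]
  · rw [Multiset.esymm, Multiset.powersetCard_eq_empty _ (by simp; omega)]
    simp

theorem derivative_mk_esymmMat {A : Matrix (Fin n) (Fin n) ℝ} (hA : A.IsHermitian) :
    d⁄dX ℝ (mk (esymmMat A)) =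
      (mk fun j => (-1) ^ j * (A ^ (j + 1)).trace) * mk (esymmMat A) := by
  ext m
  have newton := congrArg (MvPolynomial.aeval hA.eigenvalues)
    (MvPolynomial.succ_mul_esymm_eq_sum (Fin n) ℝ m)
  simp only [map_mul, map_sum, map_pow, map_neg, map_one, map_natCast,
    MvPolynomial.aeval_esymm_eq_multiset_esymm, MvPolynomial.psum, MvPolynomial.aeval_X] at newton
  simp only [coeff_derivative, coeff_mul, coeff_mk, esymmMat_eq_esymm_eigenvalues hA,
    hA.trace_pow_eq_sum_eigenvalues_pow, RCLike.ofReal_real_eq_id, id]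
  rw [mul_comm, ← newton]
  push_cast
  ring

noncomputable def sigmaInfSeries (μ : ℝ) (A : Matrix (Fin n) (Fin n) ℝ) : ℝ⟦X⟧ :=
  rescale μ (exp ℝ) * mk (esymmMat A)

theorem coeff_sigmaInfSeries (μ : ℝ) (A : Matrix (Fin n) (Fin n) ℝ) (k : ℕ) :
    coeff k (sigmaInfSeries μ A) = sigmaInfMat μ A k := by
  rw [sigmaInfSeries, sigmaInfMat, coeff_mul, Nat.sum_antidiagonal_eq_sum_range_succ_mk]
  refine sum_congr rfl fun j _ => ?_
  simp [coeff_exp, div_eq_mul_inv, mul_comm]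

theorem coeff_zero_sigmaInfSeries (μ : ℝ) (A : Matrix (Fin n) (Fin n) ℝ) :
    coeff 0 (sigmaInfSeries μ A) = 1 := by
  simpa [coeff_sigmaInfSeries, sigmaInfMat, esymmMat] using A.charpoly_monic.coeff_natDegree

theorem derivative_sigmaInfSeries (μ : ℝ) {A : Matrix (Fin n) (Fin n) ℝ} (hA : A.IsHermitian) :
    d⁄dX ℝ (sigmaInfSeries μ A) =
      (C μ + mk fun j => (-1) ^ j * (A ^ (j + 1)).trace) * sigmaInfSeries μ A := by
  rw [sigmaInfSeries, Derivation.leibniz, derivative_rescale_exp, derivative_mk_esymmMat hA,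
    smul_eq_mul, smul_eq_mul]
  ring

end SymmetricFunctionsOfMatrices

/-- If `Y : ℝ → ℝ` is differentiable and `P : ℝ → Sym(ℝⁿ)` is differentiable entrywise, then
`t ↦ σ_k^∞(Y(t);P(t))` is differentiable with derivative
`σ_{k-1}^∞(Y;P) Y' + ∑_{j=0}^{k-1} ((-1)^j/(j+1)) σ_{k-1-j}^∞(Y;P) (trace P^{j+1})'`. -/
theorem hasDerivAt_sigmaInfMat {n : ℕ} (k : ℕ) (hk : 1 ≤ k) (Y : ℝ → ℝ)
    (P : ℝ → Matrix (Fin n) (Fin n) ℝ) (hY : Differentiable ℝ Y)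
    (hsymm : ∀ t, (P t).IsSymm) (hP : ∀ i j, Differentiable ℝ fun t => P t i j) (t : ℝ) :
    HasDerivAt (fun s => sigmaInfMat (Y s) (P s) k)
      (sigmaInfMat (Y t) (P t) (k - 1) * deriv Y t
        + ∑ j ∈ Finset.range k, (-1 : ℝ) ^ j / ((j : ℝ) + 1) * sigmaInfMat (Y t) (P t) (k - 1 - j)
            * deriv (fun s => ((P s) ^ (j + 1)).trace) t) t := by
  obtain ⟨k, rfl⟩ := Nat.exists_eq_add_of_le' hk
  have hS s := derivative_sigmaInfSeries (Y s) (Matrix.isHermitian_iff_isSymm.mpr (hsymm s))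
  have hH := hasDerivAt_coeff_C_add_mk (hY t)
    fun j => ((differentiable_trace_matrix_pow hP (j + 1)).const_mul ((-1 : ℝ) ^ j)) t
  have hS₀ (L : ℝ⟦X⟧) : HasDerivAt (fun s => coeff 0 (sigmaInfSeries (Y s) (P s)))
      (coeff 0 (X * L * sigmaInfSeries (Y t) (P t))) t := by
    simpa only [coeff_zero_sigmaInfSeries, mul_assoc, coeff_zero_X_mul] using
      hasDerivAt_const t (1 : ℝ)
  have key := hasDerivAt_coeff_of_derivative_eq_mul hS hH (hS₀ _) (k + 1)
  simp only [coeff_sigmaInfSeries] at key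
  refine key.congr_deriv ?_
  rw [mul_assoc, coeff_succ_X_mul, add_mul, map_add, coeff_C_mul, coeff_mul,
    Nat.sum_antidiagonal_eq_sum_range_succ_mk]
  simp only [coeff_mk, coeff_sigmaInfSeries, deriv_const_mul_field', add_tsub_cancel_right]
  congr 1
  · ring
  · exact sum_congr rfl fun j _ => by ring
end

section
/- Let φ, ψ : ℝⁿ → ℝ be smooth, λ ∈ ℝ, and k ≥ 1 an integer. Then for every x ∈ ℝⁿ, the map t ↦ σ̃_{k,φ+tψ}(x) is differentiable at t = 0 with derivative equal to trace(T̃_{k−1,φ}(x)·Hess ψ(x)) − σ̃_{k−1,φ}(x)·⟨∇φ(x),∇ψ(x)⟩ + λ·σ̃_{k−1,φ}(x)·ψ(x). -/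
/-- The partial derivative `∂ᵢ f` of a function on Euclidean space. -/
noncomputable def pd {n : ℕ} (f : EuclideanSpace ℝ (Fin n) → ℝ) (i : Fin n)
    (x : EuclideanSpace ℝ (Fin n)) : ℝ :=
  fderiv ℝ f x (EuclideanSpace.single i 1)

/-- The Hessian matrix of a function on Euclidean space. -/
noncomputable def hessian {n : ℕ} (f : EuclideanSpace ℝ (Fin n) → ℝ)
    (x : EuclideanSpace ℝ (Fin n)) : Matrix (Fin n) (Fin n) ℝ :=
  Matrix.of fun i j => pd (pd f j) i x

/-- The modified Bakry-Émery Ricci tensor `R̃ic_φ = Hess φ - λ Iₙ` of `(ℝⁿ, dx², e^{-φ}dvol)`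
with parameter `l`. -/
noncomputable def ricci {n : ℕ} (φ : EuclideanSpace ℝ (Fin n) → ℝ) (l : ℝ)
    (x : EuclideanSpace ℝ (Fin n)) : Matrix (Fin n) (Fin n) ℝ :=
  hessian φ x - l • (1 : Matrix (Fin n) (Fin n) ℝ)

/-- `Ỹ_φ = -(1/2)(|∇φ|² - 2λφ)`. -/
noncomputable def weightedY {n : ℕ} (φ : EuclideanSpace ℝ (Fin n) → ℝ) (l : ℝ)
    (x : EuclideanSpace ℝ (Fin n)) : ℝ :=
  -(1 / 2 : ℝ) * ((∑ i, (pd φ i x) ^ 2) - 2 * l * φ x)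

/-- The weighted `σ_k`-curvature `σ̃_{k,φ} = σ_k^∞(Ỹ_φ; R̃ic_φ)`. -/
noncomputable def sigmaW {n : ℕ} (φ : EuclideanSpace ℝ (Fin n) → ℝ) (l : ℝ) (k : ℕ)
    (x : EuclideanSpace ℝ (Fin n)) : ℝ :=
  sigmaInfMat (weightedY φ l x) (ricci φ l x) k

/-- The weighted Newton tensor `T̃_{k,φ} = ∑_{j=0}^k (-1)^j σ̃_{k-j,φ} (R̃ic_φ)^j`. -/
noncomputable def newtonW {n : ℕ} (φ : EuclideanSpace ℝ (Fin n) → ℝ) (l : ℝ) (k : ℕ)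
    (x : EuclideanSpace ℝ (Fin n)) : Matrix (Fin n) (Fin n) ℝ :=
  ∑ j ∈ Finset.range (k + 1), ((-1 : ℝ) ^ j * sigmaW φ l (k - j) x) • (ricci φ l x) ^ j

/-- The trace-adjusted weighted Newton tensor `Ẽ_{k,φ} = T̃_{k,φ} - σ̃_{k,φ} Iₙ`. -/
noncomputable def newtonE {n : ℕ} (φ : EuclideanSpace ℝ (Fin n) → ℝ) (l : ℝ) (k : ℕ)
    (x : EuclideanSpace ℝ (Fin n)) : Matrix (Fin n) (Fin n) ℝ :=
  newtonW φ l k x - sigmaW φ l k x • (1 : Matrix (Fin n) (Fin n) ℝ)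

open Polynomial Finset

lemma det_piecewise_smul_X {R : Type*} [CommRing R] {n : ℕ}
    (M N : Matrix (Fin n) (Fin n) R) (s : Finset (Fin n)) :
    Matrix.detRowAlternating
        (s.piecewise (fun i => ((X : R[X]) • N.map C) i) (fun i => (M.map C) i))
      = (X : R[X]) ^ s.card *
          C (Matrix.det (Matrix.of fun i => if i ∈ s then N i else M i)) := by
  classical
  set P : Fin n → Fin n → R[X] := s.piecewise (fun i => (N.map C) i) (fun i => (M.map C) i) with hP
  have hpw : s.piecewise (fun i => ((X : R[X]) • N.map C) i) (fun i => (M.map C) i)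
      = s.piecewise (fun i => (X : R[X]) • P i) P := by
    funext i
    by_cases h : i ∈ s
    · funext j
      simp [Finset.piecewise, h, hP, Matrix.smul_apply]
    · simp [Finset.piecewise, h, hP]
  rw [hpw]
  have h2 := (Matrix.detRowAlternating (R := R[X]) (n := Fin n)).toMultilinearMap.map_piecewise_smul
      (fun _ => (X : R[X])) P s
  simp only [AlternatingMap.coe_multilinearMap] at h2
  rw [h2, Finset.prod_const]
  have hPdet : Matrix.detRowAlternating P
      = C (Matrix.det (Matrix.of fun i => if i ∈ s then N i else M i)) := by
    have h3 : Matrix.detRowAlternating P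
        = Matrix.det ((Matrix.of fun i => if i ∈ s then N i else M i).map C) := by
      congr 1
      funext i j
      by_cases h : i ∈ s <;> simp [hP, Finset.piecewise, h, Matrix.map_apply]
    rw [h3, ← RingHom.mapMatrix_apply, ← RingHom.map_det]
  rw [hPdet, smul_eq_mul]

lemma coeff_one_det_add_X_smul {R : Type*} [CommRing R] {n : ℕ}
    (M N : Matrix (Fin n) (Fin n) R) :
    (Matrix.det (M.map C + (X : R[X]) • N.map C)).coeff 1
      = (Matrix.adjugate M * N).trace := by
  classical
  have h1 : Matrix.det (M.map C + (X : R[X]) • N.map C)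
      = ∑ s : Finset (Fin n),
          (X : R[X]) ^ s.card *
            C (Matrix.det (Matrix.of fun i => if i ∈ s then N i else M i)) := by
    rw [add_comm (M.map C) ((X : R[X]) • N.map C)]
    have h0 := (Matrix.detRowAlternating (R := R[X]) (n := Fin n)).toMultilinearMap.map_add_univ
        (fun i => ((X : R[X]) • N.map C) i) (fun i => (M.map C) i)
    simp only [AlternatingMap.coe_multilinearMap] at h0
    have : Matrix.det ((X : R[X]) • N.map C + M.map C)
        = Matrix.detRowAlternating
            ((fun i => ((X : R[X]) • N.map C) i) + (fun i => (M.map C) i)) := rfl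
    rw [this, h0]
    exact Finset.sum_congr rfl fun s _ => det_piecewise_smul_X M N s
  rw [h1, finset_sum_coeff]
  have h2 : ∀ s : Finset (Fin n),
      ((X : R[X]) ^ s.card *
          C (Matrix.det (Matrix.of fun i => if i ∈ s then N i else M i))).coeff 1
        = if s.card = 1
            then Matrix.det (Matrix.of fun i => if i ∈ s then N i else M i) else 0 := by
    intro s
    rw [mul_comm, C_mul_X_pow_eq_monomial, coeff_monomial]
  simp_rw [h2]
  rw [← Finset.sum_filter]
  have h3 : (Finset.univ.filter fun s : Finset (Fin n) => s.card = 1)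
      = Finset.univ.image fun i : Fin n => ({i} : Finset (Fin n)) := by
    ext s
    simp [Finset.card_eq_one, eq_comm]
  rw [h3, Finset.sum_image (by intro i _ j _ h; exact Finset.singleton_injective h)]
  have h4 : ∀ i : Fin n,
      Matrix.det (Matrix.of fun r => if r ∈ ({i} : Finset (Fin n)) then N r else M r)
        = Matrix.det (M.updateRow i (N i)) := by
    intro i
    congr 1
    funext r j
    by_cases h : r = i <;> simp [Matrix.updateRow_apply, h]
  simp_rw [h4]
  have h5 : ∀ i : Fin n, Matrix.det (M.updateRow i (N i))
      = ∑ j, N i j * Matrix.adjugate M j i := by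
    intro i
    rw [Matrix.det_eq_sum_mul_adjugate_row (M.updateRow i (N i)) i]
    refine Finset.sum_congr rfl fun j _ => ?_
    rw [Matrix.updateRow_self]
    congr 1
    rw [Matrix.adjugate_apply, Matrix.adjugate_apply]
    congr 1
    show Function.update (Function.update M i (N i)) i (Pi.single j 1)
        = Function.update M i (Pi.single j 1)
    exact Function.update_idem ..
  simp_rw [h5]
  rw [Matrix.trace, Finset.sum_comm]
  refine Finset.sum_congr rfl fun j _ => ?_
  rw [Matrix.diag_apply, Matrix.mul_apply]
  exact Finset.sum_congr rfl fun i _ => mul_comm _ _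

open Polynomial Finset Matrix

noncomputable def newtB {n : ℕ} (A : Matrix (Fin n) (Fin n) ℝ) (s : ℕ) :
    Matrix (Fin n) (Fin n) ℝ :=
  ∑ m ∈ Finset.range (n + 1), (Matrix.charpoly A).coeff m •
    (if s < m then A ^ (m - 1 - s) else 0)

lemma adjugate_charmatrix_eq {n : ℕ} (A : Matrix (Fin n) (Fin n) ℝ) :
    matPolyEquiv (adjugate (charmatrix A)) =
      ∑ m ∈ Finset.range (n + 1),
        Polynomial.C ((Matrix.charpoly A).coeff m • (1 : Matrix (Fin n) (Fin n) ℝ)) *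
          ∑ k ∈ Finset.range m,
            (X : (Matrix (Fin n) (Fin n) ℝ)[X]) ^ k * (Polynomial.C A) ^ (m - 1 - k) := by
  rcases Nat.eq_zero_or_pos n with hn | hn
  · subst hn; exact Subsingleton.elim _ _
  haveI : Nonempty (Fin n) := Fin.pos_iff_nonempty.mp hn
  set H : (Matrix (Fin n) (Fin n) ℝ)[X] :=
    ∑ m ∈ Finset.range (n + 1),
      Polynomial.C ((Matrix.charpoly A).coeff m • (1 : Matrix (Fin n) (Fin n) ℝ)) *
        ∑ k ∈ Finset.range m,
          (X : (Matrix (Fin n) (Fin n) ℝ)[X]) ^ k * (Polynomial.C A) ^ (m - 1 - k) with hH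
  have hdeg : (Matrix.charpoly A).natDegree = n := by
    rw [Matrix.charpoly_natDegree_eq_dim, Fintype.card_fin]
  -- the common product
  have key : matPolyEquiv (adjugate (charmatrix A)) * (X - Polynomial.C A)
      = H * (X - Polynomial.C A) := by
    have h1 : matPolyEquiv (adjugate (charmatrix A)) * (X - Polynomial.C A)
        = (Matrix.charpoly A).map (algebraMap ℝ (Matrix (Fin n) (Fin n) ℝ)) := by
      rw [← matPolyEquiv_charmatrix, ← _root_.map_mul, Matrix.adjugate_mul]
      exact matPolyEquiv_smul_one _
    have h2 : H * (X - Polynomial.C A)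
        = (Matrix.charpoly A).map (algebraMap ℝ (Matrix (Fin n) (Fin n) ℝ)) := by
      rw [hH, Finset.sum_mul]
      have hcomm : Commute (X : (Matrix (Fin n) (Fin n) ℝ)[X]) (Polynomial.C A) :=
        Polynomial.commute_X (Polynomial.C A)
      have hgeom : ∀ m : ℕ,
          (∑ k ∈ Finset.range m,
              (X : (Matrix (Fin n) (Fin n) ℝ)[X]) ^ k * (Polynomial.C A) ^ (m - 1 - k)) *
            (X - Polynomial.C A) = X ^ m - (Polynomial.C A) ^ m :=
        fun m => hcomm.geom_sum₂_mul m
      simp_rw [mul_assoc, hgeom, mul_sub]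
      rw [Finset.sum_sub_distrib]
      have h3 : ∑ m ∈ Finset.range (n + 1),
          Polynomial.C ((Matrix.charpoly A).coeff m • (1 : Matrix (Fin n) (Fin n) ℝ)) *
            (Polynomial.C A) ^ m = 0 := by
        have : ∀ m : ℕ,
            Polynomial.C ((Matrix.charpoly A).coeff m • (1 : Matrix (Fin n) (Fin n) ℝ)) *
              (Polynomial.C A) ^ m
            = Polynomial.C ((Matrix.charpoly A).coeff m • A ^ m) := by
          intro m
          rw [← map_pow, ← Polynomial.C_mul, smul_mul_assoc, one_mul]
        simp_rw [this]
        rw [← map_sum, ← Polynomial.aeval_eq_sum_range' (by omega : (Matrix.charpoly A).natDegree < n + 1),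
          Matrix.aeval_self_charpoly, map_zero]
      rw [h3, sub_zero]
      -- expand the map of charpoly
      conv_rhs => rw [(Matrix.charpoly A).as_sum_range' (n + 1) (by omega)]
      rw [Polynomial.map_sum]
      refine Finset.sum_congr rfl fun m _ => ?_
      rw [Polynomial.map_monomial, ← Polynomial.C_mul_X_pow_eq_monomial,
        Algebra.algebraMap_eq_smul_one]
    rw [h1, h2]
  haveI : Nontrivial (Matrix (Fin n) (Fin n) ℝ) := by infer_instance
  exact (Polynomial.monic_X_sub_C A).isRegular.right key

lemma adjugate_charmatrix_coeff {n : ℕ} (A : Matrix (Fin n) (Fin n) ℝ) (s : ℕ) (i j : Fin n) :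
    ((Matrix.adjugate (Matrix.charmatrix A)) i j).coeff s = newtB A s i j := by
  rw [← matPolyEquiv_coeff_apply, adjugate_charmatrix_eq]
  rw [finset_sum_coeff]
  have h1 : ∀ m ∈ Finset.range (n + 1),
      (Polynomial.C ((Matrix.charpoly A).coeff m • (1 : Matrix (Fin n) (Fin n) ℝ)) *
          ∑ k ∈ Finset.range m,
            (X : (Matrix (Fin n) (Fin n) ℝ)[X]) ^ k * (Polynomial.C A) ^ (m - 1 - k)).coeff s
        = (Matrix.charpoly A).coeff m • (if s < m then A ^ (m - 1 - s) else 0) := by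
    intro m _
    rw [coeff_C_mul]
    have h2 : ∀ k, (X : (Matrix (Fin n) (Fin n) ℝ)[X]) ^ k * (Polynomial.C A) ^ (m - 1 - k)
        = Polynomial.monomial k (A ^ (m - 1 - k)) := by
      intro k
      rw [← map_pow, Polynomial.X_pow_mul, Polynomial.C_mul_X_pow_eq_monomial]
    simp_rw [h2]
    rw [finset_sum_coeff]
    simp_rw [Polynomial.coeff_monomial]
    rw [Finset.sum_ite_eq' (Finset.range m) s fun k => A ^ (m - 1 - k)]
    rw [smul_mul_assoc, one_mul]
    simp only [Finset.mem_range]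
  rw [Finset.sum_congr rfl h1]
  simp [newtB]

lemma hasDerivAt_charpoly_coeff {n : ℕ} (A B : Matrix (Fin n) (Fin n) ℝ) (s : ℕ) :
    HasDerivAt (fun t : ℝ => (Matrix.charpoly (A + t • B)).coeff s)
      (-((newtB A s * B).trace)) 0 := by
  classical
  set D : (ℝ[X])[X] :=
    Matrix.det ((Matrix.charmatrix A).map Polynomial.C
      + (X : (ℝ[X])[X]) • ((-(B.map Polynomial.C)).map Polynomial.C)) with hD
  have hev : ∀ t : ℝ, Polynomial.eval (Polynomial.C t) D = Matrix.charpoly (A + t • B) := by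
    intro t
    rw [hD, ← Polynomial.coe_evalRingHom, RingHom.map_det]
    have hmat : (Polynomial.evalRingHom (Polynomial.C t : ℝ[X])).mapMatrix
        ((Matrix.charmatrix A).map Polynomial.C
          + (X : (ℝ[X])[X]) • ((-(B.map Polynomial.C)).map Polynomial.C))
        = Matrix.charmatrix (A + t • B) := by
      ext i j
      simp only [RingHom.mapMatrix_apply, Matrix.map_apply, Matrix.add_apply, Matrix.smul_apply,
        Matrix.neg_apply, map_add, Polynomial.eval_mul, Polynomial.eval_C, Polynomial.eval_X,
        smul_eq_mul, Polynomial.eval_neg, Matrix.charmatrix_apply, Matrix.add_apply,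
        Matrix.smul_apply, map_add, Polynomial.C_add, Polynomial.C_mul, smul_eq_mul,
        Polynomial.coe_evalRingHom]
      ring
    rw [hmat]
    rfl
  have hfun : (fun t : ℝ => (Matrix.charpoly (A + t • B)).coeff s)
      = fun t : ℝ => ∑ j ∈ Finset.range (D.natDegree + 1), (D.coeff j).coeff s * t ^ j := by
    funext t
    rw [← hev t, Polynomial.eval_eq_sum_range, finset_sum_coeff]
    refine Finset.sum_congr rfl fun j _ => ?_
    rw [← Polynomial.C_pow, Polynomial.coeff_mul_C]
  rw [hfun]
  have hder : HasDerivAt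
      (fun t : ℝ => ∑ j ∈ Finset.range (D.natDegree + 1), (D.coeff j).coeff s * t ^ j)
      (∑ j ∈ Finset.range (D.natDegree + 1),
        (D.coeff j).coeff s * ((j : ℝ) * (0 : ℝ) ^ (j - 1))) 0 :=
    HasDerivAt.fun_sum fun j _ => (hasDerivAt_pow j (0 : ℝ)).const_mul _
  have hval : (∑ j ∈ Finset.range (D.natDegree + 1),
      (D.coeff j).coeff s * ((j : ℝ) * (0 : ℝ) ^ (j - 1))) = (D.coeff 1).coeff s := by
    rw [Finset.sum_eq_single 1]
    · simp
    · intro b _ hb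
      rcases Nat.eq_zero_or_pos b with hb0 | hbpos
      · subst hb0; simp
      · have : 2 ≤ b := by omega
        rw [zero_pow (by omega : b - 1 ≠ 0)]
        ring
    · intro h1
      have : D.natDegree < 1 := by
        simp only [Finset.mem_range] at h1; omega
      rw [Polynomial.coeff_eq_zero_of_natDegree_lt this]
      simp
  rw [hval] at hder
  have hc1 : (D.coeff 1).coeff s = -((newtB A s * B).trace) := by
    rw [hD, coeff_one_det_add_X_smul (Matrix.charmatrix A) (-(B.map Polynomial.C))]
    rw [Matrix.mul_neg, Matrix.trace_neg, Polynomial.coeff_neg]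
    congr 1
    rw [Matrix.trace, Polynomial.finset_sum_coeff, Matrix.trace]
    refine Finset.sum_congr rfl fun i _ => ?_
    rw [Matrix.diag_apply, Matrix.mul_apply, Polynomial.finset_sum_coeff,
      Matrix.diag_apply, Matrix.mul_apply]
    refine Finset.sum_congr rfl fun k _ => ?_
    rw [Matrix.map_apply, Polynomial.coeff_mul_C, adjugate_charmatrix_coeff]
  rw [hc1] at hder
  exact hder

section AUX

open Polynomial Finset Matrix

noncomputable def newtT {n : ℕ} (A : Matrix (Fin n) (Fin n) ℝ) (m : ℕ) :
    Matrix (Fin n) (Fin n) ℝ :=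
  ∑ i ∈ Finset.range m, ((-1 : ℝ) ^ i * esymmMat A (m - 1 - i)) • A ^ i

lemma esymmMat_zero {n : ℕ} (A : Matrix (Fin n) (Fin n) ℝ) : esymmMat A 0 = 1 := by
  rw [esymmMat, if_pos (Nat.zero_le n), pow_zero, one_mul, Nat.sub_zero]
  have hd : (Matrix.charpoly A).natDegree = n := by
    rw [Matrix.charpoly_natDegree_eq_dim, Fintype.card_fin]
  have h := (Matrix.charpoly_monic A).coeff_natDegree
  rwa [hd] at h

lemma key1 {n : ℕ} (A : Matrix (Fin n) (Fin n) ℝ) {m : ℕ} (hm : 1 ≤ m) (hmn : m ≤ n) :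
    newtT A m = ((-1 : ℝ) ^ (m + 1)) • newtB A (n - m) := by
  have h1 : newtB A (n - m)
      = ∑ j ∈ Finset.range m, (Matrix.charpoly A).coeff (n - m + 1 + j) • A ^ j := by
    rw [newtB, show Finset.range (n + 1) = Finset.Ico 0 (n + 1) by rw [Finset.range_eq_Ico],
      ← Finset.sum_Ico_consecutive _ (Nat.zero_le (n - m + 1)) (by omega : n - m + 1 ≤ n + 1)]
    have hz : ∀ q ∈ Finset.Ico 0 (n - m + 1),
        (Matrix.charpoly A).coeff q • (if n - m < q then A ^ (q - 1 - (n - m)) else 0)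
          = (0 : Matrix (Fin n) (Fin n) ℝ) := by
      intro q hq
      rw [Finset.mem_Ico] at hq
      rw [if_neg (by omega), smul_zero]
    rw [Finset.sum_congr rfl hz, Finset.sum_const_zero, zero_add,
      Finset.sum_Ico_eq_sum_range]
    have hba : n + 1 - (n - m + 1) = m := by omega
    rw [hba]
    refine Finset.sum_congr rfl fun j hj => ?_
    rw [if_pos (by omega)]
    congr 2
    omega
  rw [h1, newtT, Finset.smul_sum]
  refine Finset.sum_congr rfl fun j hj => ?_
  rw [Finset.mem_range] at hj
  rw [esymmMat, if_pos (by omega : m - 1 - j ≤ n), smul_smul]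
  have he : n - (m - 1 - j) = n - m + 1 + j := by omega
  rw [he]
  congr 1
  have hpow : (-1 : ℝ) ^ j * (-1 : ℝ) ^ (m - 1 - j) = (-1 : ℝ) ^ (m + 1) := by
    rw [← pow_add]
    have h2 : j + (m - 1 - j) = m - 1 := by omega
    rw [h2, show m + 1 = m - 1 + 2 by omega, pow_add]
    simp
  rw [← mul_assoc, hpow]

lemma key2 {n : ℕ} (A : Matrix (Fin n) (Fin n) ℝ) {m : ℕ} (hmn : n < m) :
    newtT A m = 0 := by
  have hdeg : (Matrix.charpoly A).natDegree < n + 1 := by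
    rw [Matrix.charpoly_natDegree_eq_dim, Fintype.card_fin]; omega
  rw [newtT, show Finset.range m = Finset.Ico 0 m by rw [Finset.range_eq_Ico],
    ← Finset.sum_Ico_consecutive _ (Nat.zero_le (m - 1 - n)) (by omega : m - 1 - n ≤ m)]
  have hz : ∀ i ∈ Finset.Ico 0 (m - 1 - n),
      ((-1 : ℝ) ^ i * esymmMat A (m - 1 - i)) • A ^ i = 0 := by
    intro i hi
    rw [Finset.mem_Ico] at hi
    rw [esymmMat, if_neg (by omega), mul_zero, zero_smul]
  rw [Finset.sum_congr rfl hz, Finset.sum_const_zero, zero_add,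
    Finset.sum_Ico_eq_sum_range]
  have hba : m - (m - 1 - n) = n + 1 := by omega
  rw [hba]
  have hterm : ∀ j ∈ Finset.range (n + 1),
      ((-1 : ℝ) ^ (m - 1 - n + j) * esymmMat A (m - 1 - (m - 1 - n + j))) • A ^ (m - 1 - n + j)
        = ((-1 : ℝ) ^ (m - 1)) •
            ((Matrix.charpoly A).coeff j • (A ^ (m - 1 - n) * A ^ j)) := by
    intro j hj
    rw [Finset.mem_range] at hj
    have h2 : m - 1 - (m - 1 - n + j) = n - j := by omega
    rw [h2, esymmMat, if_pos (by omega : n - j ≤ n), show n - (n - j) = j by omega,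
      show A ^ (m - 1 - n + j) = A ^ (m - 1 - n) * A ^ j from pow_add A _ _, smul_smul]
    congr 1
    rw [← mul_assoc, ← pow_add, show m - 1 - n + j + (n - j) = m - 1 by omega]
  rw [Finset.sum_congr rfl hterm, ← Finset.smul_sum]
  have h3 : ∑ j ∈ Finset.range (n + 1),
      (Matrix.charpoly A).coeff j • (A ^ (m - 1 - n) * A ^ j)
      = A ^ (m - 1 - n) * ∑ j ∈ Finset.range (n + 1), (Matrix.charpoly A).coeff j • A ^ j := by
    rw [Finset.mul_sum]
    exact Finset.sum_congr rfl fun j _ => (Matrix.mul_smul _ _ _).symm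
  rw [h3, ← Polynomial.aeval_eq_sum_range' hdeg, Matrix.aeval_self_charpoly,
    Matrix.mul_zero, smul_zero]

lemma hasDerivAt_esymmMat {n : ℕ} (A B : Matrix (Fin n) (Fin n) ℝ) (m : ℕ) :
    HasDerivAt (fun t : ℝ => esymmMat (A + t • B) m) ((newtT A m * B).trace) 0 := by
  rcases Nat.eq_zero_or_pos m with rfl | hm
  · have h0 : (fun t : ℝ => esymmMat (A + t • B) 0) = fun _ => 1 :=
      funext fun t => esymmMat_zero _
    have h1 : (newtT A 0 * B).trace = 0 := by
      simp [newtT]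
    rw [h0, h1]
    exact hasDerivAt_const 0 1
  by_cases hmn : m ≤ n
  · have h0 : (fun t : ℝ => esymmMat (A + t • B) m)
        = fun t => (-1 : ℝ) ^ m * (Matrix.charpoly (A + t • B)).coeff (n - m) := by
      funext t
      rw [esymmMat, if_pos hmn]
    rw [h0]
    have h := (hasDerivAt_charpoly_coeff A B (n - m)).const_mul ((-1 : ℝ) ^ m)
    refine h.congr_deriv ?_
    rw [key1 A hm hmn, Matrix.smul_mul, Matrix.trace_smul, smul_eq_mul, pow_succ]
    ring
  · have h0 : (fun t : ℝ => esymmMat (A + t • B) m) = fun _ => 0 := by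
      funext t
      rw [esymmMat, if_neg hmn]
    have h1 : (newtT A m * B).trace = 0 := by
      rw [key2 A (by omega), Matrix.zero_mul, Matrix.trace_zero]
    rw [h0, h1]
    exact hasDerivAt_const 0 0

lemma contDiff_pd {n : ℕ} {f : EuclideanSpace ℝ (Fin n) → ℝ} (hf : ContDiff ℝ (⊤ : ℕ∞) f) (i : Fin n) :
    ContDiff ℝ (⊤ : ℕ∞) (pd f i) := by
  have h1 : ContDiff ℝ (⊤ : ℕ∞) (fderiv ℝ f) := hf.fderiv_right (by simp)
  exact (ContinuousLinearMap.apply ℝ ℝ (EuclideanSpace.single i 1)).contDiff.comp h1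

lemma pd_add_mul {n : ℕ} {f g : EuclideanSpace ℝ (Fin n) → ℝ}
    (hf : Differentiable ℝ f) (hg : Differentiable ℝ g) (t : ℝ) (i : Fin n)
    (x : EuclideanSpace ℝ (Fin n)) :
    pd (fun y => f y + t * g y) i x = pd f i x + t * pd g i x := by
  rw [pd, pd, pd]
  rw [fderiv_fun_add (hf x) ((hg x).const_mul t), fderiv_const_mul (hg x) t]
  simp

lemma hessian_add_mul {n : ℕ} {φ ψ : EuclideanSpace ℝ (Fin n) → ℝ}
    (hφ : ContDiff ℝ (⊤ : ℕ∞) φ) (hψ : ContDiff ℝ (⊤ : ℕ∞) ψ) (t : ℝ) (x : EuclideanSpace ℝ (Fin n)) :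
    hessian (fun y => φ y + t * ψ y) x = hessian φ x + t • hessian ψ x := by
  ext i j
  rw [Matrix.add_apply, Matrix.smul_apply, hessian, hessian, hessian,
    Matrix.of_apply, Matrix.of_apply, Matrix.of_apply]
  have h1 : pd (fun y => φ y + t * ψ y) j = fun y => pd φ j y + t * pd ψ j y :=
    funext fun y => pd_add_mul (hφ.differentiable (by simp)) (hψ.differentiable (by simp)) t j y
  rw [h1, pd_add_mul ((contDiff_pd hφ j).differentiable (by simp))
    ((contDiff_pd hψ j).differentiable (by simp)) t i x]
  rw [smul_eq_mul]

lemma ricci_add_mul {n : ℕ} {φ ψ : EuclideanSpace ℝ (Fin n) → ℝ}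
    (hφ : ContDiff ℝ (⊤ : ℕ∞) φ) (hψ : ContDiff ℝ (⊤ : ℕ∞) ψ) (t : ℝ) (l : ℝ)
    (x : EuclideanSpace ℝ (Fin n)) :
    ricci (fun y => φ y + t * ψ y) l x = ricci φ l x + t • hessian ψ x := by
  rw [ricci, ricci, hessian_add_mul hφ hψ t x, add_sub_right_comm]

lemma weightedY_add_mul {n : ℕ} {φ ψ : EuclideanSpace ℝ (Fin n) → ℝ}
    (hφ : ContDiff ℝ (⊤ : ℕ∞) φ) (hψ : ContDiff ℝ (⊤ : ℕ∞) ψ) (t : ℝ) (l : ℝ)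
    (x : EuclideanSpace ℝ (Fin n)) :
    weightedY (fun y => φ y + t * ψ y) l x
      = weightedY φ l x + t * (l * ψ x - ∑ i, pd φ i x * pd ψ i x)
        + t ^ 2 * (-(1 / 2 : ℝ) * ∑ i, (pd ψ i x) ^ 2) := by
  rw [weightedY, weightedY]
  have h1 : ∀ i : Fin n, pd (fun y => φ y + t * ψ y) i x = pd φ i x + t * pd ψ i x :=
    fun i => pd_add_mul (hφ.differentiable (by simp)) (hψ.differentiable (by simp)) t i x
  simp_rw [h1]
  have h2 : (∑ i, (pd φ i x + t * pd ψ i x) ^ 2)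
      = (∑ i, (pd φ i x) ^ 2) + t * (2 * ∑ i, pd φ i x * pd ψ i x)
        + t ^ 2 * ∑ i, (pd ψ i x) ^ 2 := by
    rw [Finset.mul_sum, Finset.mul_sum, Finset.mul_sum, ← Finset.sum_add_distrib,
      ← Finset.sum_add_distrib]
    exact Finset.sum_congr rfl fun i _ => by ring
  rw [h2]
  ring

lemma sum_triangle {M : Type*} [AddCommMonoid M] (k : ℕ) (g : ℕ → ℕ → M) :
    ∑ i ∈ Finset.range k, ∑ j ∈ Finset.range (k - i), g i j
      = ∑ j ∈ Finset.range k, ∑ i ∈ Finset.range (k - j), g i j := by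
  have h1 : ∀ i ∈ Finset.range k, (∑ j ∈ Finset.range (k - i), g i j)
      = ∑ j ∈ Finset.range k, if i + j < k then g i j else 0 := by
    intro i _
    rw [← Finset.sum_filter]
    refine (Finset.sum_congr ?_ fun _ _ => rfl).symm
    ext j
    simp only [Finset.mem_filter, Finset.mem_range]
    omega
  have h2 : ∀ j ∈ Finset.range k, (∑ i ∈ Finset.range (k - j), g i j)
      = ∑ i ∈ Finset.range k, if i + j < k then g i j else 0 := by
    intro j _
    rw [← Finset.sum_filter]
    refine (Finset.sum_congr ?_ fun _ _ => rfl).symm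
    ext i
    simp only [Finset.mem_filter, Finset.mem_range]
    omega
  rw [Finset.sum_congr rfl h1, Finset.sum_comm]
  exact (Finset.sum_congr rfl h2).symm

lemma newtonW_eq {n : ℕ} (φ : EuclideanSpace ℝ (Fin n) → ℝ) (l : ℝ) {k : ℕ} (hk : 1 ≤ k)
    (x : EuclideanSpace ℝ (Fin n)) :
    newtonW φ l (k - 1) x
      = ∑ j ∈ Finset.range k, (weightedY φ l x ^ j / (Nat.factorial j : ℝ)) •
          newtT (ricci φ l x) (k - j) := by
  rw [newtonW, show k - 1 + 1 = k from by omega]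
  have hL : ∀ i ∈ Finset.range k,
      ((-1 : ℝ) ^ i * sigmaW φ l (k - 1 - i) x) • (ricci φ l x) ^ i
        = ∑ j ∈ Finset.range (k - i),
            (((-1 : ℝ) ^ i * (weightedY φ l x ^ j / (Nat.factorial j : ℝ)))
              * esymmMat (ricci φ l x) (k - 1 - i - j)) • (ricci φ l x) ^ i := by
    intro i hi
    rw [Finset.mem_range] at hi
    rw [sigmaW, sigmaInfMat, show k - 1 - i + 1 = k - i from by omega, Finset.mul_sum,
      Finset.sum_smul]
    exact Finset.sum_congr rfl fun j _ => by rw [← mul_assoc]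
  rw [Finset.sum_congr rfl hL, sum_triangle]
  refine Finset.sum_congr rfl fun j hj => ?_
  rw [newtT, Finset.smul_sum]
  refine Finset.sum_congr rfl fun i hi => ?_
  rw [smul_smul, show k - j - 1 - i = k - 1 - i - j from by omega]
  congr 1
  ring

end AUX

/-- Linearization of the weighted `σ_k`-curvature:
`(d/dt)|_{t=0} σ̃_{k,φ+tψ} = ⟨T̃_{k-1,φ}, ∇²ψ⟩ - σ̃_{k-1,φ} ⟨∇φ,∇ψ⟩ + λ σ̃_{k-1,φ} ψ`. -/
theorem hasDerivAt_sigmaW {n : ℕ} (φ ψ : EuclideanSpace ℝ (Fin n) → ℝ)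
    (hφ : ContDiff ℝ (⊤ : ℕ∞) φ) (hψ : ContDiff ℝ (⊤ : ℕ∞) ψ) (l : ℝ) (k : ℕ) (hk : 1 ≤ k)
    (x : EuclideanSpace ℝ (Fin n)) :
    HasDerivAt (fun t : ℝ => sigmaW (fun y => φ y + t * ψ y) l k x)
      ((newtonW φ l (k - 1) x * hessian ψ x).trace
        - sigmaW φ l (k - 1) x * (∑ i, pd φ i x * pd ψ i x)
        + l * sigmaW φ l (k - 1) x * ψ x) 0 := by
  classical
  set A := ricci φ l x with hA
  set Bm := hessian ψ x with hB
  set Y0 := weightedY φ l x with hY0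
  set c1 : ℝ := l * ψ x - ∑ i, pd φ i x * pd ψ i x with hc1
  set c2 : ℝ := -(1 / 2 : ℝ) * ∑ i, (pd ψ i x) ^ 2 with hc2
  have hfun : (fun t : ℝ => sigmaW (fun y => φ y + t * ψ y) l k x)
      = fun t => ∑ j ∈ Finset.range (k + 1),
          (Y0 + t * c1 + t ^ 2 * c2) ^ j / (Nat.factorial j : ℝ)
            * esymmMat (A + t • Bm) (k - j) := by
    funext t
    rw [sigmaW, sigmaInfMat, weightedY_add_mul hφ hψ t l x, ricci_add_mul hφ hψ t l x]
  rw [hfun]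
  have hY : HasDerivAt (fun t : ℝ => Y0 + t * c1 + t ^ 2 * c2) c1 0 := by
    have h := ((hasDerivAt_const (0 : ℝ) Y0).add
      ((hasDerivAt_id (0 : ℝ)).mul_const c1)).add ((hasDerivAt_pow 2 0).mul_const c2)
    refine h.congr_deriv ?_
    norm_num
  have hterm : ∀ j ∈ Finset.range (k + 1),
      HasDerivAt (fun t : ℝ => (Y0 + t * c1 + t ^ 2 * c2) ^ j / (Nat.factorial j : ℝ)
          * esymmMat (A + t • Bm) (k - j))
        (((j : ℝ) * Y0 ^ (j - 1) * c1) / (Nat.factorial j : ℝ) * esymmMat A (k - j)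
          + Y0 ^ j / (Nat.factorial j : ℝ) * (newtT A (k - j) * Bm).trace) 0 := by
    intro j _
    have h := ((hY.pow j).div_const ((Nat.factorial j : ℝ))).mul
      (hasDerivAt_esymmMat A Bm (k - j))
    norm_num at h
    exact h
  have hsum := HasDerivAt.fun_sum hterm
  refine hsum.congr_deriv ?_
  rw [Finset.sum_add_distrib]
  have hfact : ∀ j : ℕ, ((Nat.factorial j : ℝ)) ≠ 0 :=
    fun j => Nat.cast_ne_zero.mpr (Nat.factorial_ne_zero j)
  have hs1 : ∑ j ∈ Finset.range (k + 1),
      ((j : ℝ) * Y0 ^ (j - 1) * c1) / (Nat.factorial j : ℝ) * esymmMat A (k - j)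
      = sigmaW φ l (k - 1) x * c1 := by
    rw [Finset.sum_range_succ']
    have h0 : ((0 : ℕ) : ℝ) * Y0 ^ (0 - 1) * c1 / (Nat.factorial 0 : ℝ)
        * esymmMat A (k - 0) = 0 := by norm_num
    rw [h0, add_zero]
    have h1 : ∀ j : ℕ, (((j + 1 : ℕ) : ℝ) * Y0 ^ (j + 1 - 1) * c1) / (Nat.factorial (j + 1) : ℝ)
        * esymmMat A (k - (j + 1))
        = (Y0 ^ j / (Nat.factorial j : ℝ) * esymmMat A (k - 1 - j)) * c1 := by
      intro j
      rw [show k - (j + 1) = k - 1 - j from by omega, Nat.factorial_succ, Nat.cast_mul, Nat.add_sub_cancel]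
      have hj1 : ((j + 1 : ℕ) : ℝ) ≠ 0 := by positivity
      field_simp
    rw [Finset.sum_congr rfl fun j _ => h1 j, ← Finset.sum_mul]
    congr 1
    rw [sigmaW, sigmaInfMat, show k - 1 + 1 = k from by omega]
  have hs2 : ∑ j ∈ Finset.range (k + 1),
      Y0 ^ j / (Nat.factorial j : ℝ) * (newtT A (k - j) * Bm).trace
      = (newtonW φ l (k - 1) x * Bm).trace := by
    rw [Finset.sum_range_succ, show k - k = 0 from by omega]
    have h0 : (newtT A 0 * Bm).trace = 0 := by simp [newtT]
    rw [h0, mul_zero, add_zero, newtonW_eq φ l hk x, Finset.sum_mul, Matrix.trace_sum]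
    refine Finset.sum_congr rfl fun j hj => ?_
    rw [Matrix.smul_mul, Matrix.trace_smul, smul_eq_mul]
  rw [hs1, hs2]
  ring
end
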